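/- (Theorem 2) Let C be a binary linear code with even minimum distance d, with coset leaders chosen as ⪯-minimum elements, and let T be a trial set for C. If (1/2)·C(d, d/2) > |A_d(T)| − 1, then (1/2)·C(d,d/2)·|A_d(T)| − (|A_d(T)| − 1)·|A_d(T)| ≤ |E^1_{d/2}(C)| ≤ (1/2)·C(d,d/2)·|A_d(T)|, where C(m,r) denotes the binomial coefficient. -/

import Mathlib

/-- Support of a binary vector: the set of nonzero coordinates. -/
def supp {n : ℕ} (x : Fin n → ZMod 2) : Finset (Fin n) :=
  Finset.univ.filter (fun i => x i ≠ 0)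

/-- Hamming weight. -/
def wt {n : ℕ} (x : Fin n → ZMod 2) : ℕ := (supp x).card

/-- Numerical value v(x) = Σ_{i=1}^n x_i 2^(n-i) (0-based: exponent n-1-i). -/
def nval {n : ℕ} (x : Fin n → ZMod 2) : ℕ :=
  ∑ i : Fin n, (x i).val * 2 ^ (n - 1 - (i : ℕ))

/-- The total order ⪯ : first by weight, ties broken by numerical value. -/
def ple {n : ℕ} (x y : Fin n → ZMod 2) : Prop :=
  wt x < wt y ∨ (wt x = wt y ∧ nval x ≤ nval y)

/-- The strict version ≺ of ⪯. -/
def plt {n : ℕ} (x y : Fin n → ZMod 2) : Prop := ple x y ∧ x ≠ y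

/-- Covering order: x ⊆ y iff S(x) ⊆ S(y). -/
def covers {n : ℕ} (x y : Fin n → ZMod 2) : Prop := supp x ⊆ supp y

/-- v is the coset leader of its coset of C, i.e. the ⪯-minimum element
(u ranges over the coset of v: u + v ∈ C). -/
def IsCosetLeader {n : ℕ} (C : Submodule (ZMod 2) (Fin n → ZMod 2))
    (v : Fin n → ZMod 2) : Prop :=
  ∀ u, u + v ∈ C → ple v u

/-- E⁰(C): the set of correctable errors (coset leaders). -/
def E0 {n : ℕ} (C : Submodule (ZMod 2) (Fin n → ZMod 2)) : Set (Fin n → ZMod 2) :=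
  {v | IsCosetLeader C v}

/-- E¹(C): the set of uncorrectable errors. -/
def E1 {n : ℕ} (C : Submodule (ZMod 2) (Fin n → ZMod 2)) : Set (Fin n → ZMod 2) :=
  {v | ¬ IsCosetLeader C v}

/-- M¹(C): the ⊆-minimal elements of E¹(C). -/
def M1 {n : ℕ} (C : Submodule (ZMod 2) (Fin n → ZMod 2)) : Set (Fin n → ZMod 2) :=
  {v ∈ E1 C | ∀ u ∈ E1 C, covers u v → u = v}

/-- v is a larger half of c: v is ⊆-minimal among vectors u with u + c ≺ u. -/
def IsLH {n : ℕ} (c v : Fin n → ZMod 2) : Prop :=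
  plt (v + c) v ∧ ∀ u, plt (u + c) u → covers u v → u = v

/-- LH(c): the set of larger halves of c. -/
def LH {n : ℕ} (c : Fin n → ZMod 2) : Set (Fin n → ZMod 2) := {v | IsLH c v}

/-- LH(U) = ∪_{c ∈ U} LH(c). -/
def LHset {n : ℕ} (U : Set (Fin n → ZMod 2)) : Set (Fin n → ZMod 2) :=
  ⋃ c ∈ U, LH c

/-- LH⁻(c): larger halves of c of weight w(c)/2 (for even-weight c). -/
def LHm {n : ℕ} (c : Fin n → ZMod 2) : Set (Fin n → ZMod 2) :=
  {v ∈ LH c | 2 * wt v = wt c}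

/-- A_i(U): elements of U of weight i. -/
def Aw {n : ℕ} (U : Set (Fin n → ZMod 2)) (i : ℕ) : Set (Fin n → ZMod 2) :=
  {v ∈ U | wt v = i}

/-- C has minimum distance d. -/
def HasMinDist {n : ℕ} (C : Submodule (ZMod 2) (Fin n → ZMod 2)) (d : ℕ) : Prop :=
  (∃ c ∈ C, c ≠ 0 ∧ wt c = d) ∧ ∀ c ∈ C, c ≠ 0 → d ≤ wt c

/-- T is a trial set for C. -/
def IsTrialSet {n : ℕ} (C : Submodule (ZMod 2) (Fin n → ZMod 2))
    (T : Set (Fin n → ZMod 2)) : Prop :=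
  T ⊆ (C : Set (Fin n → ZMod 2)) \ {0} ∧ M1 C ⊆ LHset T

/-- l(x) = min S(x), the leftmost nonzero coordinate (⊤ if x = 0). -/
def lm {n : ℕ} (x : Fin n → ZMod 2) : WithTop (Fin n) := (supp x).min

/-- The coordinatewise "and" of two vectors: support is S(x) ∩ S(y). -/
def vand {n : ℕ} (x y : Fin n → ZMod 2) : Fin n → ZMod 2 := fun i => x i * y i

section Aux
variable {n : ℕ}

lemma zmod2_cases : ∀ a : ZMod 2, a = 0 ∨ a = 1 := by decide

lemma zmod2_add_self : ∀ a : ZMod 2, a + a = 0 := by decide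

lemma mem_supp {x : Fin n → ZMod 2} {i : Fin n} : i ∈ supp x ↔ x i ≠ 0 := by
  simp [supp]

lemma supp_inj {x y : Fin n → ZMod 2} (h : supp x = supp y) : x = y := by
  funext i
  have hx := zmod2_cases (x i); have hy := zmod2_cases (y i)
  have h2 := Finset.ext_iff.mp h i
  simp only [mem_supp] at h2
  rcases hx with h1 | h1 <;> rcases hy with h3 | h3 <;> simp_all

lemma nval_eq_sum (x : Fin n → ZMod 2) :
    nval x = ∑ i ∈ supp x, 2 ^ (n - 1 - (i : ℕ)) := by
  rw [nval]
  rw [← Finset.sum_filter_add_sum_filter_not Finset.univ (fun i => x i ≠ 0)]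
  have h1 : ∑ i ∈ Finset.univ.filter (fun i => ¬ x i ≠ 0),
      (x i).val * 2 ^ (n - 1 - (i : ℕ)) = 0 := by
    apply Finset.sum_eq_zero
    intro i hi
    simp only [Finset.mem_filter, not_not] at hi
    simp [hi.2]
  rw [h1, add_zero]
  apply Finset.sum_congr rfl
  intro i hi
  simp only [supp, Finset.mem_filter] at hi
  rcases zmod2_cases (x i) with h | h
  · exact absurd h hi.2
  · rw [h]; norm_num [ZMod.val_one]

lemma sum_two_pow_inj {s t : Finset ℕ} (h : ∑ i ∈ s, 2 ^ i = ∑ i ∈ t, 2 ^ i) :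
    s = t := by
  have key : ∀ u : Finset ℕ,
      ((u.sort (· ≤ ·)).map (fun i => 2 ^ i)).sum = ∑ i ∈ u, 2 ^ i := by
    intro u
    rw [Finset.sum_eq_multiset_sum, ← Finset.sort_eq u (· ≤ ·),
      Multiset.map_coe, Multiset.sum_coe]
  have h1 := Nat.bitIndices_twoPowsum (Finset.sortedLT_sort s)
  have h2 := Nat.bitIndices_twoPowsum (Finset.sortedLT_sort t)
  rw [key, h, ← key t, h2] at h1
  have := congrArg List.toFinset h1.symm
  rwa [Finset.sort_toFinset, Finset.sort_toFinset] at this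

lemma nval_inj {x y : Fin n → ZMod 2} (h : nval x = nval y) : x = y := by
  apply supp_inj
  have hinj : ∀ s : Finset (Fin n), ∀ a ∈ s, ∀ b ∈ s,
      n - 1 - (a : ℕ) = n - 1 - (b : ℕ) → a = b := by
    intro s a _ b _ hab
    have ha := a.isLt; have hb := b.isLt
    exact Fin.ext (by omega)
  have key : (supp x).image (fun i : Fin n => n - 1 - (i : ℕ)) =
      (supp y).image (fun i : Fin n => n - 1 - (i : ℕ)) := by
    apply sum_two_pow_inj
    rw [Finset.sum_image (hinj _), Finset.sum_image (hinj _)]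
    rw [← nval_eq_sum, ← nval_eq_sum, h]
  have hmapinj : Function.Injective (fun i : Fin n => n - 1 - (i : ℕ)) := by
    intro a b hab
    simp only at hab
    have ha := a.isLt; have hb := b.isLt
    exact Fin.ext (by omega)
  exact Finset.image_injective hmapinj key

end Aux
section Aux2
variable {n : ℕ}

lemma ple_refl (x : Fin n → ZMod 2) : ple x x := Or.inr ⟨rfl, le_rfl⟩

lemma ple_antisymm {x y : Fin n → ZMod 2} (h1 : ple x y) (h2 : ple y x) : x = y := by
  rcases h1 with h1 | ⟨hw1, hn1⟩ <;> rcases h2 with h2 | ⟨hw2, hn2⟩ <;>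
    first
    | omega
    | exact nval_inj (le_antisymm hn1 hn2)

lemma plt_total {x y : Fin n → ZMod 2} (hw : wt x = wt y) (hne : x ≠ y) :
    plt x y ∨ plt y x := by
  rcases le_total (nval x) (nval y) with h | h
  · exact Or.inl ⟨Or.inr ⟨hw, h⟩, hne⟩
  · exact Or.inr ⟨Or.inr ⟨hw.symm, h⟩, hne.symm⟩

lemma ple_wt_le {x y : Fin n → ZMod 2} (h : ple x y) : wt x ≤ wt y := by
  rcases h with h | ⟨h, _⟩ <;> omega

lemma zmod2_vec_add_eq_zero {x y : Fin n → ZMod 2} : x + y = 0 ↔ x = y := by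
  constructor
  · intro h; funext i
    have := congrFun h i
    have hx := zmod2_cases (x i); have hy := zmod2_cases (y i)
    rcases hx with h1 | h1 <;> rcases hy with h2 | h2 <;> simp_all
  · intro h; subst h; funext i; exact zmod2_add_self (x i)

lemma add_add_cancel' (x y : Fin n → ZMod 2) : x + y + y = x := by
  funext i
  show x i + y i + y i = x i
  rw [add_assoc, zmod2_add_self, add_zero]

lemma mem_E1_of_plt {C : Submodule (ZMod 2) (Fin n → ZMod 2)}
    {c v : Fin n → ZMod 2} (hc : c ∈ C) (h : plt (v + c) v) : v ∈ E1 C := by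
  intro hlead
  have hmem : (v + c) + v ∈ C := by
    have : (v + c) + v = c := by
      funext i; show v i + c i + v i = c i
      have h2 := zmod2_add_self (v i)
      calc v i + c i + v i = (v i + v i) + c i := by ring
        _ = c i := by rw [h2, zero_add]
    rwa [this]
  have h1 : ple v (v + c) := hlead (v + c) hmem
  exact h.2 (ple_antisymm h.1 h1)

lemma supp_add_subset (x y : Fin n → ZMod 2) : supp (x + y) ⊆ supp x ∪ supp y := by
  intro i hi
  rw [mem_supp] at hi
  rw [Finset.mem_union, mem_supp, mem_supp]
  by_contra hcon
  push_neg at hcon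
  apply hi
  show x i + y i = 0
  rw [hcon.1, hcon.2, add_zero]

lemma wt_add_le (x y : Fin n → ZMod 2) : wt (x + y) ≤ wt x + wt y :=
  le_trans (Finset.card_le_card (supp_add_subset x y)) (Finset.card_union_le _ _)

lemma leader_of_small {C : Submodule (ZMod 2) (Fin n → ZMod 2)} {d : ℕ}
    (hd : HasMinDist C d) {u : Fin n → ZMod 2} (hu : 2 * wt u < d) :
    IsCosetLeader C u := by
  intro w hw
  by_cases hwu : w = u
  · subst hwu; exact ple_refl w
  · have hne : w + u ≠ 0 := fun h0 => hwu (zmod2_vec_add_eq_zero.mp h0)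
    have hd' : d ≤ wt (w + u) := hd.2 _ hw hne
    have h2 : wt (w + u) ≤ wt w + wt u := wt_add_le w u
    left; omega

lemma mem_M1 {C : Submodule (ZMod 2) (Fin n → ZMod 2)} {d : ℕ}
    (hd : HasMinDist C d) {v : Fin n → ZMod 2} (hv : v ∈ E1 C)
    (hw : 2 * wt v ≤ d) : v ∈ M1 C := by
  refine ⟨hv, ?_⟩
  intro u hu hcov
  by_contra hne
  have hne' : supp u ≠ supp v := fun h => hne (supp_inj h)
  have hlt : wt u < wt v :=
    Finset.card_lt_card (Finset.ssubset_iff_subset_ne.mpr ⟨hcov, hne'⟩)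
  exact hu (leader_of_small hd (by omega))

end Aux2
section Aux3
variable {n : ℕ}

lemma supp_update_zero (v : Fin n → ZMod 2) (i : Fin n) :
    supp (Function.update v i 0) = (supp v).erase i := by
  ext j
  rw [mem_supp, Finset.mem_erase, mem_supp]
  by_cases hj : j = i
  · subst hj; simp
  · simp [Function.update_of_ne hj, hj]

lemma nval_update_zero {v : Fin n → ZMod 2} {i : Fin n} (hi : i ∈ supp v) :
    nval (Function.update v i 0) + 2 ^ (n - 1 - (i : ℕ)) = nval v := by
  rw [nval_eq_sum, nval_eq_sum, supp_update_zero, add_comm]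
  exact Finset.add_sum_erase _ (fun j : Fin n => 2 ^ (n - 1 - (j : ℕ))) hi

lemma wt_update_zero {v : Fin n → ZMod 2} {i : Fin n} (hi : i ∈ supp v) :
    wt (Function.update v i 0) + 1 = wt v := by
  rw [wt, wt, supp_update_zero]
  exact Finset.card_erase_add_one hi

lemma lh_supp_subset {c v : Fin n → ZMod 2} (h : IsLH c v) : supp v ⊆ supp c := by
  by_contra hns
  rw [Finset.subset_iff] at hns
  push_neg at hns
  obtain ⟨i, hiv, hic⟩ := hns
  have hci : c i = 0 := by
    by_contra hc; exact hic (mem_supp.mpr hc)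
  set u := Function.update v i 0 with hu
  have hvc : i ∈ supp (v + c) := by
    rw [mem_supp]
    show v i + c i ≠ 0
    rw [hci, add_zero]; exact mem_supp.mp hiv
  have huc : u + c = Function.update (v + c) i 0 := by
    funext j
    by_cases hj : j = i
    · subst hj
      show u j + c j = _
      rw [hu, Function.update_self, Function.update_self, hci, add_zero]
    · show u j + c j = _
      rw [hu, Function.update_of_ne hj, Function.update_of_ne hj]; rfl
  have hcne : c ≠ 0 := by
    intro h0; apply h.1.2; rw [h0, add_zero]
  have hune : u + c ≠ u := fun he => hcne (add_eq_left.mp he)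
  have w1 : wt u + 1 = wt v := wt_update_zero hiv
  have w2 : wt (u + c) + 1 = wt (v + c) := by rw [huc]; exact wt_update_zero hvc
  have n1 : nval u + 2 ^ (n - 1 - (i : ℕ)) = nval v := nval_update_zero hiv
  have n2 : nval (u + c) + 2 ^ (n - 1 - (i : ℕ)) = nval (v + c) := by
    rw [huc]; exact nval_update_zero hvc
  have hple : ple (u + c) u := by
    rcases h.1.1 with hlt | ⟨hw, hn⟩
    · left; omega
    · have hne : nval (v + c) ≠ nval v := fun he => h.1.2 (nval_inj he)
      right; constructor <;> omega
  have heq : u = v := h.2 u ⟨hple, hune⟩ (by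
    show supp u ⊆ supp v
    rw [hu, supp_update_zero]
    exact Finset.erase_subset _ _)
  have : u i = v i := congrFun heq i
  rw [hu, Function.update_self] at this
  exact mem_supp.mp hiv this.symm

lemma supp_add_of_subset {v c : Fin n → ZMod 2} (h : supp v ⊆ supp c) :
    supp (v + c) = supp c \ supp v := by
  ext j
  rw [mem_supp, Finset.mem_sdiff, mem_supp, mem_supp]
  show v j + c j ≠ 0 ↔ _
  rcases zmod2_cases (v j) with h1 | h1
  · rw [h1, zero_add]; simp [h1]
  · have hj : j ∈ supp c := h (mem_supp.mpr (by rw [h1]; decide))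
    rw [mem_supp] at hj
    rcases zmod2_cases (c j) with h2 | h2
    · exact absurd h2 hj
    · rw [h1, h2]
      simp [h1]
      decide

lemma wt_add_of_subset {v c : Fin n → ZMod 2} (h : supp v ⊆ supp c) :
    wt (v + c) + wt v = wt c := by
  rw [wt, wt, wt, supp_add_of_subset h, Finset.card_sdiff_of_subset h]
  have := Finset.card_le_card h
  omega

end Aux3
section Aux4
variable {n : ℕ}

open Classical in
/-- The set of candidate larger halves of `c` of weight `d/2`. -/
noncomputable def Sc (d : ℕ) (c : Fin n → ZMod 2) : Finset (Fin n → ZMod 2) :=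
  Finset.univ.filter (fun v => plt (v + c) v ∧ supp v ⊆ supp c ∧ wt v = d / 2)

lemma mem_Sc {d : ℕ} {c v : Fin n → ZMod 2} :
    v ∈ Sc d c ↔ plt (v + c) v ∧ supp v ⊆ supp c ∧ wt v = d / 2 := by
  simp [Sc]

open Classical in
lemma card_B {d : ℕ} {c : Fin n → ZMod 2} (hwc : wt c = d) :
    (Finset.univ.filter
      (fun v : Fin n → ZMod 2 => supp v ⊆ supp c ∧ wt v = d / 2)).card
      = Nat.choose d (d / 2) := by
  have h0 : (Finset.powersetCard (d / 2) (supp c)).card = Nat.choose d (d / 2) := by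
    rw [Finset.card_powersetCard, show (supp c).card = d from hwc]
  rw [← h0]
  apply Finset.card_bij (fun v _ => supp v)
  · intro v hv
    simp only [Finset.mem_filter] at hv
    rw [Finset.mem_powersetCard]
    exact ⟨hv.2.1, hv.2.2⟩
  · intro a ha b hb hab
    exact supp_inj hab
  · intro s hs
    rw [Finset.mem_powersetCard] at hs
    refine ⟨fun i => if i ∈ s then 1 else 0, ?_, ?_⟩
    · have hsupp : supp (fun i => if i ∈ s then (1 : ZMod 2) else 0) = s := by
        ext j
        rw [mem_supp]
        by_cases hj : j ∈ s <;> simp [hj]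
      simp only [Finset.mem_filter, Finset.mem_univ, true_and]
      rw [wt, hsupp]
      exact ⟨hs.1, hs.2⟩
    · ext j
      rw [mem_supp]
      by_cases hj : j ∈ s <;> simp [hj]

lemma card_Sc {d : ℕ} (hd2 : 2 * (d / 2) = d) {c : Fin n → ZMod 2}
    (hc0 : c ≠ 0) (hwc : wt c = d) :
    2 * (Sc d c).card = Nat.choose d (d / 2) := by
  classical
  set B := Finset.univ.filter
    (fun v : Fin n → ZMod 2 => supp v ⊆ supp c ∧ wt v = d / 2) with hB
  have hmemB : ∀ v, v ∈ B ↔ supp v ⊆ supp c ∧ wt v = d / 2 := by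
    intro v; simp [hB]
  have hScB : Sc d c ⊆ B := by
    intro v hv
    rw [mem_Sc] at hv
    exact (hmemB v).mpr hv.2
  -- key closure: if v ∈ B then v + c ∈ B
  have hclose : ∀ v ∈ B, v + c ∈ B := by
    intro v hv
    rw [hmemB] at hv ⊢
    have h1 : supp (v + c) = supp c \ supp v := supp_add_of_subset hv.1
    constructor
    · rw [h1]; exact Finset.sdiff_subset
    · have := wt_add_of_subset hv.1
      omega
  have hvcne : ∀ v : Fin n → ZMod 2, v + c ≠ v :=
    fun v he => hc0 (add_eq_left.mp he)
  have hwteq : ∀ v ∈ B, wt (v + c) = wt v := by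
    intro v hv
    have h1 := wt_add_of_subset ((hmemB v).mp hv).1
    have h2 := ((hmemB (v + c)).mp (hclose v hv)).2
    have h3 := ((hmemB v).mp hv).2
    omega
  -- bijection Sc → B \ Sc given by v ↦ v + c
  have hcard : (Sc d c).card = (B \ Sc d c).card := by
    apply Finset.card_bij (fun v _ => v + c)
    · intro v hv
      rw [Finset.mem_sdiff]
      have hvB := hScB hv
      refine ⟨hclose v hvB, ?_⟩
      rw [mem_Sc] at hv ⊢
      intro hcon
      rw [add_add_cancel'] at hcon
      exact (hvcne v) (ple_antisymm hv.1.1 hcon.1.1)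
    · intro a _ b _ hab
      have := congrArg (· + c) hab
      simpa [add_add_cancel'] using this
    · intro w hw
      rw [Finset.mem_sdiff] at hw
      refine ⟨w + c, ?_, (add_add_cancel' w c).symm ▸ rfl⟩
      · rw [mem_Sc, add_add_cancel']
        have hwB := hw.1
        refine ⟨?_, ((hmemB _).mp (hclose w hwB)).1, ((hmemB _).mp (hclose w hwB)).2⟩
        have hnot : ¬ plt (w + c) w := by
          intro hcon
          apply hw.2
          rw [mem_Sc]
          exact ⟨hcon, ((hmemB w).mp hwB).1, ((hmemB w).mp hwB).2⟩
        rcases plt_total (hwteq w hwB) (hvcne w) with h | h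
        · exact absurd h hnot
        · exact h
  have hsplit : B.card = (Sc d c).card + (B \ Sc d c).card := by
    rw [Finset.card_sdiff_of_subset hScB]
    have := Finset.card_le_card hScB
    omega
  have hBcard : B.card = Nat.choose d (d / 2) := card_B hwc
  omega

end Aux4
section Aux5
variable {n : ℕ}

lemma supp_add_eq (c c' : Fin n → ZMod 2) :
    supp (c + c') = (supp c ∪ supp c') \ (supp c ∩ supp c') := by
  ext j
  rw [mem_supp, Finset.mem_sdiff, Finset.mem_union, Finset.mem_inter,
    mem_supp, mem_supp]
  show c j + c' j ≠ 0 ↔ _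
  rcases zmod2_cases (c j) with h1 | h1 <;> rcases zmod2_cases (c' j) with h2 | h2 <;>
    rw [h1, h2] <;> simp <;> decide

lemma wt_add_eq (c c' : Fin n → ZMod 2) :
    wt (c + c') + (supp c ∩ supp c').card + (supp c ∩ supp c').card
      = wt c + wt c' := by
  rw [wt, wt, wt, supp_add_eq, Finset.card_sdiff_of_subset (Finset.inter_subset_union)]
  have h1 := Finset.card_union_add_card_inter (supp c) (supp c')
  have h2 : (supp c ∩ supp c').card ≤ (supp c ∪ supp c').card :=
    Finset.card_le_card Finset.inter_subset_union
  omega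

lemma card_Sc_inter {C : Submodule (ZMod 2) (Fin n → ZMod 2)} {d : ℕ}
    (hd : HasMinDist C d) (hd2 : 2 * (d / 2) = d)
    {c c' : Fin n → ZMod 2} (hc : c ∈ C) (hc' : c' ∈ C) (hne : c ≠ c')
    (hwc : wt c = d) (hwc' : wt c' = d) :
    (Sc d c ∩ Sc d c').card ≤ 1 := by
  rw [Finset.card_le_one]
  intro a ha b hb
  rw [Finset.mem_inter, mem_Sc, mem_Sc] at ha hb
  have hccne : c + c' ≠ 0 := fun h0 => hne (zmod2_vec_add_eq_zero.mp h0)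
  have hdcc : d ≤ wt (c + c') := hd.2 _ (C.add_mem hc hc') hccne
  have hwi := wt_add_eq c c'
  have hIle : (supp c ∩ supp c').card ≤ d / 2 := by omega
  have key : ∀ x : Fin n → ZMod 2,
      plt (x + c) x ∧ supp x ⊆ supp c ∧ wt x = d / 2 →
      plt (x + c') x ∧ supp x ⊆ supp c' ∧ wt x = d / 2 →
      supp x = supp c ∩ supp c' := by
    intro x hx hx'
    have hsub : supp x ⊆ supp c ∩ supp c' :=
      Finset.subset_inter hx.2.1 hx'.2.1
    apply Finset.eq_of_subset_of_card_le hsub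
    rw [show (supp x).card = wt x from rfl, hx.2.2]
    exact hIle
  exact supp_inj ((key a ha.1 ha.2).trans (key b hb.1 hb.2).symm)

lemma union_count {α β : Type*} [DecidableEq α] [DecidableEq β]
    (A : Finset α) (S : α → Finset β)
    (h : ∀ c ∈ A, ∀ c' ∈ A, c ≠ c' → (S c ∩ S c').card ≤ 1) :
    ∑ c ∈ A, (S c).card + A.card ≤ (A.biUnion S).card + A.card * A.card := by
  classical
  induction A using Finset.induction_on with
  | empty => simp
  | @insert a A' ha ih =>
    have hsum : ∑ c ∈ insert a A', (S c).card
        = (S a).card + ∑ c ∈ A', (S c).card := Finset.sum_insert ha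
    have hbu : (insert a A').biUnion S = S a ∪ A'.biUnion S :=
      Finset.biUnion_insert
    have hcardins : (insert a A').card = A'.card + 1 := Finset.card_insert_of_notMem ha
    have hUnion := Finset.card_union_add_card_inter (S a) (A'.biUnion S)
    have hIle : (S a ∩ A'.biUnion S).card ≤ A'.card := by
      have hsub : S a ∩ A'.biUnion S ⊆ A'.biUnion (fun c => S a ∩ S c) := by
        intro x hx
        rw [Finset.mem_inter, Finset.mem_biUnion] at hx
        obtain ⟨c, hcA, hxc⟩ := hx.2
        rw [Finset.mem_biUnion]
        exact ⟨c, hcA, Finset.mem_inter.mpr ⟨hx.1, hxc⟩⟩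
      calc (S a ∩ A'.biUnion S).card ≤ _ := Finset.card_le_card hsub
        _ ≤ ∑ c ∈ A', (S a ∩ S c).card := Finset.card_biUnion_le
        _ ≤ ∑ _c ∈ A', 1 := by
            apply Finset.sum_le_sum
            intro c hcA
            exact h a (Finset.mem_insert_self a A') c
              (Finset.mem_insert_of_mem hcA) (fun he => ha (he ▸ hcA))
        _ = A'.card := by simp
    have ih' := ih (fun c hc c' hc' hne =>
      h c (Finset.mem_insert_of_mem hc) c' (Finset.mem_insert_of_mem hc') hne)
    rw [hsum, hbu, hcardins]
    nlinarith [hUnion, hIle, ih']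

end Aux5
/-- Theorem 2: bounds on |E¹_{d/2}(C)| for even d. -/
theorem stmt13 {n : ℕ} (C : Submodule (ZMod 2) (Fin n → ZMod 2)) (d : ℕ)
    (hd : HasMinDist C d) (heven : Even d)
    (T : Set (Fin n → ZMod 2)) (hT : IsTrialSet C T)
    (hcond : (1 / 2 : ℚ) * (Nat.choose d (d / 2) : ℚ) > ((Aw T d).ncard : ℚ) - 1) :
    (1 / 2 : ℚ) * (Nat.choose d (d / 2) : ℚ) * ((Aw T d).ncard : ℚ) -
        (((Aw T d).ncard : ℚ) - 1) * ((Aw T d).ncard : ℚ)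
      ≤ ((Aw (E1 C) (d / 2)).ncard : ℚ) ∧
    ((Aw (E1 C) (d / 2)).ncard : ℚ) ≤
      (1 / 2 : ℚ) * (Nat.choose d (d / 2) : ℚ) * ((Aw T d).ncard : ℚ) := by

  classical
  have hd2 : 2 * (d / 2) = d := by obtain ⟨r, hr⟩ := heven; omega
  set A : Finset (Fin n → ZMod 2) :=
    Finset.univ.filter (fun c => c ∈ T ∧ wt c = d) with hA
  have hAmem : ∀ c, c ∈ A ↔ c ∈ T ∧ wt c = d := by intro c; simp [hA]
  set E : Finset (Fin n → ZMod 2) :=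
    Finset.univ.filter (fun v => v ∈ E1 C ∧ wt v = d / 2) with hE
  have hEmem : ∀ v, v ∈ E ↔ v ∈ E1 C ∧ wt v = d / 2 := by intro v; simp [hE]
  have hAncard : (Aw T d).ncard = A.card := by
    rw [show Aw T d = (↑A : Set _) by ext v; simp [Aw, hAmem v], Set.ncard_coe_finset]
  have hEncard : (Aw (E1 C) (d / 2)).ncard = E.card := by
    rw [show Aw (E1 C) (d / 2) = (↑E : Set _) by ext v; simp [Aw, hEmem v],
      Set.ncard_coe_finset]
  have hup : E ⊆ A.biUnion (Sc d) := by
    intro v hv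
    rw [hEmem] at hv
    have hvM1 : v ∈ M1 C := mem_M1 hd hv.1 (by omega)
    have hmem := hT.2 hvM1
    simp only [LHset, LH, Set.mem_iUnion, Set.mem_setOf_eq] at hmem
    obtain ⟨c, hcT, hlh⟩ := hmem
    have hsub : supp v ⊆ supp c := lh_supp_subset hlh
    have hCc := hT.1 hcT
    have hcC : c ∈ C := hCc.1
    have hc0 : c ≠ 0 := by simpa using hCc.2
    have hwt := wt_add_of_subset hsub
    have hle : wt (v + c) ≤ wt v := ple_wt_le hlh.1.1
    have hdle : d ≤ wt c := hd.2 c hcC hc0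
    have hwc : wt c = d := by omega
    rw [Finset.mem_biUnion]
    exact ⟨c, (hAmem c).mpr ⟨hcT, hwc⟩, mem_Sc.mpr ⟨hlh.1, hsub, hv.2⟩⟩
  have hlow : A.biUnion (Sc d) ⊆ E := by
    intro v hv
    rw [Finset.mem_biUnion] at hv
    obtain ⟨c, hcA, hvS⟩ := hv
    rw [hAmem] at hcA
    rw [mem_Sc] at hvS
    have hcC : c ∈ C := (hT.1 hcA.1).1
    exact (hEmem v).mpr ⟨mem_E1_of_plt hcC hvS.1, hvS.2.2⟩
  have hScard : ∀ c ∈ A, (fun c => 2 * (Sc d c).card) c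
      = (fun _ => Nat.choose d (d / 2)) c := by
    intro c hc
    rw [hAmem] at hc
    exact card_Sc hd2 (by simpa using (hT.1 hc.1).2) hc.2
  have hpair : ∀ c ∈ A, ∀ c' ∈ A, c ≠ c' → (Sc d c ∩ Sc d c').card ≤ 1 := by
    intro c hc c' hc' hne
    rw [hAmem] at hc hc'
    exact card_Sc_inter hd hd2 (hT.1 hc.1).1 (hT.1 hc'.1).1 hne hc.2 hc'.2
  have hsum2 : 2 * ∑ c ∈ A, (Sc d c).card = A.card * Nat.choose d (d / 2) := by
    rw [Finset.mul_sum, Finset.sum_congr rfl hScard, Finset.sum_const, smul_eq_mul]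
  have h1 : E.card ≤ ∑ c ∈ A, (Sc d c).card :=
    le_trans (Finset.card_le_card hup) Finset.card_biUnion_le
  have h2 : ∑ c ∈ A, (Sc d c).card + A.card ≤ E.card + A.card * A.card := by
    have hu := union_count A (Sc d) hpair
    have hl := Finset.card_le_card hlow
    omega
  rw [hAncard, hEncard]
  have c1 : (2 : ℚ) * (∑ c ∈ A, (Sc d c).card : ℚ)
      = (A.card : ℚ) * (Nat.choose d (d / 2) : ℚ) := by exact_mod_cast hsum2
  have c2 : (E.card : ℚ) ≤ (∑ c ∈ A, (Sc d c).card : ℚ) := by exact_mod_cast h1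
  have c3 : (∑ c ∈ A, (Sc d c).card : ℚ) + (A.card : ℚ)
      ≤ (E.card : ℚ) + (A.card : ℚ) * (A.card : ℚ) := by exact_mod_cast h2
  constructor
  · linarith
  · linarith
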